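/- arXiv:2502.03380 — 2 statements merged into one kernel-verified Lean document; each statement's English description precedes it below -/
import Mathlib

section
/- Let G be a group, let k be a commutative ring in which 2 is invertible, and let M be a k-linear representation of G. If some element z of the center of G acts on M as multiplication by −1 (i.e., z·m = −m for all m ∈ M), then the group homology H_n(G, M) vanishes for every n ≥ 0; in particular the coinvariants M_G = 0. -/
/-!
Inserting a central element `z` into bar chains in every position, with alternating signs, is
a chain homotopy `h` between the identity and the chain map induced by the pair
(conjugation by `z`, action of `z⁻¹`), and conjugation by `z` is the identity of `G`:
`d h + h d = z⁻¹ · - 1`. If `z` acts as `-1` this makes `2` null-homotopic, so every cycle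
`w` satisfies `d (h w) = -2 w`, and since `2` is invertible on `M` (and additive maps commute
with `⅟2 •`), `w` is the boundary of `-(⅟2 • h w)`.
-/

open scoped TensorProduct DirectSum

noncomputable section

namespace GH

variable (G : Type) [Group G] (M : Type) [AddCommGroup M] (ρ : G →* Multiplicative (AddAut M))

/-- Inhomogeneous bar chains: `C n = ⊕_{G^n} M`. -/
abbrev C (n : ℕ) : Type := (Fin n → G) →₀ M

/-- Contraction of a tuple of group elements: multiply entries `i` and `i+1`. -/
def contract {n : ℕ} (g : Fin (n + 1) → G) (i : Fin n) : Fin n → G := fun j =>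
  if (j : ℕ) < (i : ℕ) then g j.castSucc
  else if j = i then g i.castSucc * g i.succ
  else g j.succ

/-- The inhomogeneous bar differential
`d(m ⊗ [g₁|⋯|gₙ₊₁]) = g₁⁻¹·m ⊗ [g₂|⋯] + Σ (-1)ⁱ m ⊗ [⋯|gᵢgᵢ₊₁|⋯] + (-1)ⁿ⁺¹ m ⊗ [g₁|⋯|gₙ]`. -/
def d (n : ℕ) : C G M (n + 1) →+ C G M n :=
  Finsupp.liftAddHom fun g =>
    ((Finsupp.singleAddHom (Fin.tail g)).comp (ρ (g 0)⁻¹).toAdd.toAddMonoidHom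
      + (∑ i : Fin n, ((-1 : ℤ) ^ ((i : ℕ) + 1)) • Finsupp.singleAddHom (M := M) (contract G g i))
      + ((-1 : ℤ) ^ (n + 1)) • Finsupp.singleAddHom (Fin.init g) : M →+ C G M n)

/-- Cycles of the bar complex. -/
def Z : (n : ℕ) → AddSubgroup (C G M n)
  | 0 => ⊤
  | (n + 1) => (d G M ρ n).ker

/-- Boundaries of the bar complex. -/
def B (n : ℕ) : AddSubgroup (C G M n) := (d G M ρ n).range

/-- Group homology of `G` with coefficients in `M` (via the action `ρ`):
cycles modulo boundaries of the bar complex. -/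
abbrev H (n : ℕ) : Type :=
  Z G M ρ n ⧸ ((B G M ρ n).addSubgroupOf (Z G M ρ n))

/-- The chain map induced by a map of groups together with a compatible
map of coefficients. -/
def cmap {G₁ G₂ : Type} {M₁ M₂ : Type} [AddCommGroup M₁] [AddCommGroup M₂]
    (f : G₁ → G₂) (φ : M₁ →+ M₂) (n : ℕ) :
    ((Fin n → G₁) →₀ M₁) →+ ((Fin n → G₂) →₀ M₂) :=
  Finsupp.liftAddHom fun g => (Finsupp.singleAddHom (f ∘ g)).comp φ

end GH

/-- Coinvariants `M_G = H₀(G, M)` of a group action: the quotient of `M` by the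
subgroup generated by all `g·m − m`. -/
abbrev Coinv (G : Type) [Group G] (M : Type) [AddCommGroup M] (ρ : G →* Multiplicative (AddAut M)) : Type :=
  M ⧸ AddSubgroup.closure {x : M | ∃ (g : G) (m : M), x = (ρ g).toAdd m - m}

theorem Fin.init_cons {α : Type*} {m : ℕ} (a : α) (g : Fin (m + 1) → α) :
    Fin.init (Fin.cons a g : Fin (m + 2) → α) = Fin.cons a (Fin.init g) := by
  funext j
  cases j using Fin.cases <;> rfl

theorem AddMonoidHom.map_invOf_two_smul {k A B : Type*} [Semiring k] [Invertible (2 : k)]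
    [AddCommMonoid A] [Module k A] [AddCommMonoid B] [Module k B] (f : A →+ B) (x : A) :
    f ((⅟2 : k) • x) = (⅟2 : k) • f x := by
  conv_rhs => rw [← invOf_two_smul_add_invOf_two_smul k x, map_add, ← two_smul k, smul_smul,
    invOf_mul_self, one_smul]

namespace GH

section Chains

variable {G M : Type} [AddCommGroup M]

def prepend (a : G) {m : ℕ} : C G M m →+ C G M (m + 1) :=
  Finsupp.liftAddHom fun g => Finsupp.singleAddHom (Fin.cons a g)

def homotopy (z : G) {m : ℕ} : C G M m →+ C G M (m + 1) :=
  Finsupp.liftAddHom fun g =>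
    ∑ i : Fin (m + 1), ((-1 : ℤ) ^ (i : ℕ)) • Finsupp.singleAddHom (Fin.insertNth i z g)

@[simp] lemma prepend_single (a : G) {m : ℕ} (g : Fin m → G) (x : M) :
    prepend a (Finsupp.single g x) = Finsupp.single (Fin.cons a g) x := by
  simp [prepend]

@[simp] lemma homotopy_single (z : G) {m : ℕ} (g : Fin m → G) (x : M) :
    homotopy z (Finsupp.single g x) =
      ∑ i : Fin (m + 1), ((-1 : ℤ) ^ (i : ℕ)) • Finsupp.single (Fin.insertNth i z g) x := by
  simp [homotopy]

@[simp] lemma cmap_single {G₁ G₂ M₁ M₂ : Type} [AddCommGroup M₁] [AddCommGroup M₂]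
    (f : G₁ → G₂) (φ : M₁ →+ M₂) {n : ℕ} (g : Fin n → G₁) (x : M₁) :
    cmap f φ n (Finsupp.single g x) = Finsupp.single (f ∘ g) (φ x) := by
  simp [cmap]

lemma cmap_id_neg (n : ℕ) (w : C G M n) : cmap id (-AddMonoidHom.id M) n w = -w := by
  induction w using Finsupp.induction_linear with
  | zero => simp
  | add u v hu hv => simp only [map_add, hu, hv, neg_add]
  | single g x => simp

lemma prepend_induction {m : ℕ} {p : C G M (m + 1) → Prop} (w : C G M (m + 1)) (zero : p 0)
    (add : ∀ u v, p u → p v → p (u + v)) (prepend : ∀ a y, p (prepend a y)) : p w := by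
  induction w using Finsupp.induction_linear with
  | zero => exact zero
  | add u v hu hv => exact add u v hu hv
  | single g x => simpa using prepend (g 0) (Finsupp.single (Fin.tail g) x)

lemma cmap_prepend {M' : Type} [AddCommGroup M'] (φ : M →+ M') (a : G) {m : ℕ} (w : C G M m) :
    cmap id φ (m + 1) (prepend a w) = prepend a (cmap id φ m w) := by
  induction w using Finsupp.induction_linear with
  | zero => simp
  | add u v hu hv => simp only [map_add, hu, hv]
  | single g x => simp

lemma homotopy_cmap {M' : Type} [AddCommGroup M'] (φ : M →+ M') (z : G) {m : ℕ}
    (w : C G M m) : homotopy z (cmap id φ m w) = cmap id φ (m + 1) (homotopy z w) := by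
  induction w using Finsupp.induction_linear with
  | zero => simp
  | add u v hu hv => simp only [map_add, hu, hv]
  | single g x => simp [map_sum, map_zsmul]

lemma homotopy_zero (z : G) (w : C G M 0) : homotopy z w = prepend z w := by
  induction w using Finsupp.induction_linear with
  | zero => simp
  | add u v hu hv => simp only [map_add, hu, hv]
  | single g x => simp [Fin.insertNth_zero']

lemma homotopy_prepend (z a : G) {m : ℕ} (w : C G M m) :
    homotopy z (prepend a w) = prepend z (prepend a w) - prepend a (homotopy z w) := by
  induction w using Finsupp.induction_linear with
  | zero => simp
  | add u v hu hv => simp only [map_add, hu, hv]; abel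
  | single g x =>
    simp [Fin.sum_univ_succ, pow_succ, Fin.insertNth_zero']
    abel

end Chains

variable {G M : Type} [Group G] [AddCommGroup M] (ρ : G →* Multiplicative (AddAut M))

def mulHead (a : G) {m : ℕ} : C G M (m + 1) →+ C G M (m + 1) :=
  Finsupp.liftAddHom fun g => Finsupp.singleAddHom (Fin.cons (a * g 0) (Fin.tail g))

def headFace {m : ℕ} : C G M (m + 1) →+ C G M m :=
  Finsupp.liftAddHom fun g =>
    (Finsupp.singleAddHom (Fin.tail g)).comp (ρ (g 0)⁻¹).toAdd.toAddMonoidHom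

@[simp] lemma mulHead_single (a : G) {m : ℕ} (g : Fin (m + 1) → G) (x : M) :
    mulHead a (Finsupp.single g x) = Finsupp.single (Fin.cons (a * g 0) (Fin.tail g)) x := by
  simp [mulHead]

@[simp] lemma headFace_single {m : ℕ} (g : Fin (m + 1) → G) (x : M) :
    headFace ρ (Finsupp.single g x) = Finsupp.single (Fin.tail g) ((ρ (g 0)⁻¹).toAdd x) := by
  simp [headFace]

@[simp] lemma contract_cons_zero {m : ℕ} (a : G) (g : Fin (m + 1) → G) :
    contract G (Fin.cons a g) 0 = Fin.cons (a * g 0) (Fin.tail g) := by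
  funext j
  cases j using Fin.cases <;> simp [contract, Fin.succ_ne_zero, Fin.tail]

@[simp] lemma contract_cons_succ {m : ℕ} (a : G) (g : Fin (m + 1) → G) (i : Fin m) :
    contract G (Fin.cons a g) i.succ = Fin.cons a (contract G g i) := by
  funext j
  cases j using Fin.cases with
  | zero => simp [contract]
  | succ k =>
    simp only [contract, Fin.cons_succ, Fin.val_succ, Fin.succ_inj, add_lt_add_iff_right,
      ← Fin.succ_castSucc]

lemma d_single (m : ℕ) (g : Fin (m + 1) → G) (x : M) :
    d G M ρ m (Finsupp.single g x)
      = Finsupp.single (Fin.tail g) ((ρ (g 0)⁻¹).toAdd x)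
        + ∑ i : Fin m, ((-1 : ℤ) ^ ((i : ℕ) + 1)) • Finsupp.single (contract G g i) x
        + ((-1 : ℤ) ^ (m + 1)) • Finsupp.single (Fin.init g) x := by
  simp [d]

lemma mulHead_prepend (b a : G) {m : ℕ} (w : C G M m) :
    mulHead b (prepend a w) = prepend (b * a) w := by
  induction w using Finsupp.induction_linear with
  | zero => simp
  | add u v hu hv => simp only [map_add, hu, hv]
  | single g x => simp

lemma headFace_prepend (a : G) {m : ℕ} (w : C G M m) :
    headFace ρ (prepend a w) = cmap id (ρ a⁻¹).toAdd.toAddMonoidHom m w := by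
  induction w using Finsupp.induction_linear with
  | zero => simp
  | add u v hu hv => simp only [map_add, hu, hv]
  | single g x => simp

lemma homotopy_mulHead (z a : G) {m : ℕ} (w : C G M (m + 1)) :
    homotopy z (mulHead a w)
      = mulHead a (homotopy z w) + prepend z (mulHead a w) - prepend (a * z) w := by
  induction w using Finsupp.induction_linear with
  | zero => simp
  | add u v hu hv => simp only [map_add, hu, hv]; abel
  | single g x =>
    cases g using Fin.consCases with
    | cons b g =>
    simp [Fin.sum_univ_succ, pow_succ, Fin.insertNth_zero']
    abel

lemma headFace_homotopy (z : G) {m : ℕ} (w : C G M (m + 1)) :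
    headFace ρ (homotopy z w)
      = cmap id (ρ z⁻¹).toAdd.toAddMonoidHom (m + 1) w - homotopy z (headFace ρ w) := by
  induction w using Finsupp.induction_linear with
  | zero => simp
  | add u v hu hv => simp only [map_add, hu, hv]; abel
  | single g x =>
    cases g using Fin.consCases with
    | cons b g =>
    simp [Fin.sum_univ_succ, pow_succ, Fin.insertNth_zero', map_sum, map_zsmul]
    abel

lemma d_zero_prepend (a : G) (w : C G M 0) :
    d G M ρ 0 (prepend a w) = cmap id (ρ a⁻¹).toAdd.toAddMonoidHom 0 w - w := by
  induction w using Finsupp.induction_linear with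
  | zero => simp
  | add u v hu hv => simp only [map_add, hu, hv]; abel
  | single g x => simp [d_single, sub_eq_add_neg, Subsingleton.elim _ g]

lemma d_prepend (a : G) {m : ℕ} (w : C G M (m + 1)) :
    d G M ρ (m + 1) (prepend a w)
      = cmap id (ρ a⁻¹).toAdd.toAddMonoidHom (m + 1) w - mulHead a w
        - prepend a (d G M ρ m w) + prepend a (headFace ρ w) := by
  induction w using Finsupp.induction_linear with
  | zero => simp
  | add u v hu hv => simp only [map_add, hu, hv]; abel
  | single g x =>
    simp [d_single, Fin.sum_univ_succ, pow_succ, map_sum, Fin.init_cons]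
    abel

theorem d_homotopy_add_homotopy_d {z : G} (hz : z ∈ Subgroup.center G) (n : ℕ)
    (w : C G M (n + 1)) :
    d G M ρ (n + 1) (homotopy z w) + homotopy z (d G M ρ n w)
      = cmap id (ρ z⁻¹).toAdd.toAddMonoidHom (n + 1) w - w := by
  have hzc (a : G) : z * a = a * z := (Subgroup.mem_center_iff.mp hz a).symm
  induction n with
  | zero =>
    induction w using prepend_induction with
    | zero => simp
    | add u v hu hv =>
      rw [map_add, map_add, map_add, map_add, add_add_add_comm, hu, hv, map_add]
      abel
    | prepend a y =>
      simp only [homotopy_prepend, homotopy_zero, d_prepend, d_zero_prepend, map_sub,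
        headFace_prepend, mulHead_prepend, cmap_prepend, homotopy_cmap, hzc]
      abel
  | succ n ih =>
    induction w using prepend_induction with
    | zero => simp
    | add u v hu hv =>
      rw [map_add, map_add, map_add, map_add, add_add_add_comm, hu, hv, map_add]
      abel
    | prepend a y =>
      have ih' := eq_sub_of_add_eq (ih y)
      simp only [homotopy_prepend, d_prepend, map_add, map_sub, headFace_prepend,
        mulHead_prepend, cmap_prepend, homotopy_cmap, homotopy_mulHead, headFace_homotopy,
        ih', hzc]
      abel

theorem d_homotopy_of_mem_Z {z : G} (hz : z ∈ Subgroup.center G) {n : ℕ} {w : C G M n}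
    (hw : w ∈ Z G M ρ n) :
    d G M ρ n (homotopy z w) = cmap id (ρ z⁻¹).toAdd.toAddMonoidHom n w - w := by
  cases n with
  | zero => rw [homotopy_zero, d_zero_prepend]
  | succ n =>
    have hdw : d G M ρ n w = 0 := hw
    simpa [hdw] using d_homotopy_add_homotopy_d ρ hz n w

theorem mem_B_of_mem_Z (k : Type) [CommRing k] [Invertible (2 : k)] [Module k M] {z : G}
    (hz : z ∈ Subgroup.center G) (hzm : ∀ m : M, (ρ z).toAdd m = -m) {n : ℕ} {w : C G M n}
    (hw : w ∈ Z G M ρ n) : w ∈ B G M ρ n := by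
  have hz_inv : (ρ z⁻¹).toAdd.toAddMonoidHom = -AddMonoidHom.id M := by
    ext x
    simpa using (AddEquiv.symm_apply_eq _).mpr (by rw [hzm, neg_neg])
  refine ⟨-((⅟2 : k) • homotopy z w), ?_⟩
  calc d G M ρ n (-((⅟2 : k) • homotopy z w))
      = -((⅟2 : k) • d G M ρ n (homotopy z w)) := by
        rw [map_neg, AddMonoidHom.map_invOf_two_smul]
    _ = -((⅟2 : k) • (-w - w)) := by rw [d_homotopy_of_mem_Z ρ hz hw, hz_inv, cmap_id_neg]
    _ = w := by
        rw [← neg_add', smul_neg, neg_neg, smul_add, invOf_two_smul_add_invOf_two_smul]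

end GH

theorem statement2_general (G : Type) [Group G] (k : Type) [CommRing k] [Invertible (2 : k)]
    (M : Type) [AddCommGroup M] [Module k M] (ρ : G →* Multiplicative (AddAut M))
    (z : G) (hz : z ∈ Subgroup.center G) (hzm : ∀ m : M, (ρ z).toAdd m = -m) :
    ∀ n : ℕ, Subsingleton (GH.H G M ρ n) := by
  intro n
  have hZB : GH.Z G M ρ n ≤ GH.B G M ρ n := fun w hw => GH.mem_B_of_mem_Z ρ k hz hzm hw
  show Subsingleton (_ ⧸ _)
  rw [AddSubgroup.addSubgroupOf_eq_top.mpr hZB]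
  exact QuotientAddGroup.subsingleton_quotient_top

/-- If a central element `z` of `G` acts as `-1` on a `k`-linear
representation `M`, where `2` is invertible in `k`, then `Hₙ(G, M) = 0` for all `n`. -/
theorem statement2 (G : Type) [Group G] (k : Type) [CommRing k] [Invertible (2 : k)]
    (M : Type) [AddCommGroup M] [Module k M] (ρ : G →* Multiplicative (AddAut M))
    (hlin : ∀ (g : G) (c : k) (m : M), (ρ g).toAdd (c • m) = c • (ρ g).toAdd m)
    (z : G) (hz : z ∈ Subgroup.center G) (hzm : ∀ m : M, (ρ z).toAdd m = -m) :
    ∀ n : ℕ, Subsingleton (GH.H G M ρ n) :=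
  statement2_general G k M ρ z hz hzm
end
end

section
/- There exists a surjective group homomorphism φ: ℝ ⊗_ℤ (ℝ/ℤ) → Ω¹_ℝ such that for every ℓ ∈ ℝ and every t ∈ ℝ with sin(πt) ≠ 0, φ(ℓ ⊗ [t]) = ℓ · (sin(πt))⁻¹ · d(cos(πt)), where [t] denotes the class of t in ℝ/ℤ. (In particular this formula is well defined: it is additive in t, depends only on t modulo ℤ, and extends additively to all of ℝ ⊗_ℤ ℝ/ℤ.) -/
/-!
On the unit circle `sin θ · d(sin θ) + cos θ · d(cos θ) = 0`, so the form
`d(cos θ) / sin θ` behaves like `-dθ`: the addition formulas for `sin` and `cos` make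
`θ ↦ d(cos θ) / sin θ` additive on all of `ℝ`, and it vanishes at `θ = π`. Hence
`t ↦ d(cos πt) / sin πt` factors through `ℝ/ℤ`, and the `ℝ`-linear extension
`ℓ ⊗ [t] ↦ ℓ · d(cos πt) / sin πt` is defined on `ℝ ⊗_ℤ ℝ/ℤ`. Its image is an `ℝ`-submodule
containing `sin θ · d(cos θ)/sin θ = d(cos θ)`, i.e. every `dr` with `|r| ≤ 1`, hence every `dr`
(as `d(n s) = n ds`), and the `dr` span `Ω¹_ℝ`.
-/

open scoped TensorProduct

noncomputable section

namespace Derivation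

variable {R A M : Type*} [CommRing R] [CommRing A] [Algebra R A] [AddCommGroup M] [Module A M]
  [Module R M]

theorem smul_add_smul_eq_zero_of_sq_add_sq_eq_one [Invertible (2 : A)] (D : Derivation R A M)
    {a b : A} (h : a ^ 2 + b ^ 2 = 1) : a • D a + b • D b = 0 := by
  have h2 : (2 : A) • (a • D a + b • D b) = 0 := by
    simpa [leibniz_pow, smul_add, ofNat_smul_eq_nsmul (R := A)] using congrArg D h
  simpa using congrArg ((⅟2 : A) • ·) h2

theorem inv_smul_map_mul_sub_mul {K : Type*} [Field K] [Algebra R K] [Module K M]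
    (D : Derivation R K M) {c₁ s₁ c₂ s₂ : K}
    (h₁ : s₁ • D s₁ + c₁ • D c₁ = 0) (h₂ : s₂ • D s₂ + c₂ • D c₂ = 0)
    (hs₁ : s₁ ≠ 0) (hs₂ : s₂ ≠ 0) (hs : s₁ * c₂ + c₁ * s₂ ≠ 0) :
    (s₁ * c₂ + c₁ * s₂)⁻¹ • D (c₁ * c₂ - s₁ * s₂) = s₁⁻¹ • D c₁ + s₂⁻¹ • D c₂ := by
  rw [inv_smul_eq_iff₀ hs]
  apply smul_right_injective M (mul_ne_zero hs₁ hs₂)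
  simp only [smul_add, smul_smul, map_sub, leibniz]
  linear_combination (norm := skip) (-(s₂ * s₂)) • h₁ + (-(s₁ * s₁)) • h₂
  match_scalars <;> field_simp <;> ring

end Derivation

open Real KaehlerDifferential

-- At the zeros of `sin` the inverse is the junk value `0`; there `d(cos θ) = d(±1) = 0` anyway.
def dCosDivSin (θ : ℝ) : Ω[ℝ⁄ℤ] := (sin θ)⁻¹ • D ℤ ℝ (cos θ)

theorem dCosDivSin_of_sin_eq_zero {x : ℝ} (hx : sin x = 0) : dCosDivSin x = 0 := by
  simp [dCosDivSin, hx]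

theorem dCosDivSin_add_of_sin_eq_zero {x : ℝ} (hx : sin x = 0) (y : ℝ) :
    dCosDivSin (x + y) = dCosDivSin y := by
  rcases sin_eq_zero_iff_cos_eq.mp hx with h | h <;> simp [dCosDivSin, cos_add, sin_add, hx, h]

theorem dCosDivSin_neg (x : ℝ) : dCosDivSin (-x) = -dCosDivSin x := by
  simp [dCosDivSin]

theorem smul_dCosDivSin {x : ℝ} (hx : sin x ≠ 0) : sin x • dCosDivSin x = D ℤ ℝ (cos x) := by
  rw [dCosDivSin, smul_inv_smul₀ hx]

theorem dCosDivSin_add (x y : ℝ) : dCosDivSin (x + y) = dCosDivSin x + dCosDivSin y := by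
  by_cases hx : sin x = 0
  · rw [dCosDivSin_add_of_sin_eq_zero hx, dCosDivSin_of_sin_eq_zero hx, zero_add]
  by_cases hy : sin y = 0
  · rw [add_comm x, dCosDivSin_add_of_sin_eq_zero hy, dCosDivSin_of_sin_eq_zero hy, add_zero]
  by_cases hxy : sin (x + y) = 0
  · have h := dCosDivSin_add_of_sin_eq_zero hxy (-x)
    rw [add_neg_cancel_comm, dCosDivSin_neg] at h
    rw [dCosDivSin_of_sin_eq_zero hxy, h, add_neg_cancel]
  rw [sin_add] at hxy
  rw [dCosDivSin, dCosDivSin, dCosDivSin, cos_add, sin_add]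
  exact (D ℤ ℝ).inv_smul_map_mul_sub_mul
    ((D ℤ ℝ).smul_add_smul_eq_zero_of_sq_add_sq_eq_one (sin_sq_add_cos_sq x))
    ((D ℤ ℝ).smul_add_smul_eq_zero_of_sq_add_sq_eq_one (sin_sq_add_cos_sq y)) hx hy hxy

def angleForm : AddCircle (1 : ℝ) →+ Ω[ℝ⁄ℤ] :=
  QuotientAddGroup.lift _
    ((AddMonoidHom.mk' dCosDivSin dCosDivSin_add).comp (AddMonoidHom.mulLeft π))
    (AddSubgroup.zmultiples_le.mpr (by simp [dCosDivSin]))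

def jessenMap : ℝ ⊗[ℤ] AddCircle (1 : ℝ) →ₗ[ℝ] Ω[ℝ⁄ℤ] :=
  angleForm.toIntLinearMap.liftBaseChange ℝ

theorem jessenMap_tmul (ℓ t : ℝ) :
    jessenMap (ℓ ⊗ₜ[ℤ] (t : AddCircle (1 : ℝ))) = ℓ • dCosDivSin (π * t) :=
  rfl

theorem D_cos_mem_range_jessenMap (θ : ℝ) :
    D ℤ ℝ (cos θ) ∈ LinearMap.range jessenMap := by
  by_cases hθ : sin θ = 0
  · rcases sin_eq_zero_iff_cos_eq.mp hθ with h | h <;> simp [h]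
  refine ⟨sin θ ⊗ₜ[ℤ] ((θ / π : ℝ) : AddCircle (1 : ℝ)), ?_⟩
  rw [jessenMap_tmul, mul_div_cancel₀ θ pi_ne_zero, smul_dCosDivSin hθ]

theorem D_mem_range_jessenMap (r : ℝ) : D ℤ ℝ r ∈ LinearMap.range jessenMap := by
  obtain ⟨n, hn⟩ := exists_nat_gt |r|
  have hn₀ : (0 : ℝ) < n := (abs_nonneg r).trans_lt hn
  have hr : |r / n| ≤ 1 := by
    rw [abs_div, Nat.abs_cast, div_le_one hn₀]
    exact hn.le
  have hcos : cos (arccos (r / n)) = r / n := cos_arccos (abs_le.mp hr).1 (abs_le.mp hr).2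
  rw [show r = n • (r / n) by rw [nsmul_eq_mul]; field_simp, map_nsmul, ← hcos]
  exact nsmul_mem (D_cos_mem_range_jessenMap _) n

theorem jessenMap_surjective : Function.Surjective jessenMap := by
  rw [← LinearMap.range_eq_top, eq_top_iff, ← span_range_derivation, Submodule.span_le]
  rintro _ ⟨r, rfl⟩
  exact D_mem_range_jessenMap r

/-- There is a surjective group homomorphism
`φ : ℝ ⊗_ℤ ℝ/ℤ → Ω¹_ℝ` with `φ(ℓ ⊗ [t]) = ℓ · (sin πt)⁻¹ · d(cos πt)`
whenever `sin πt ≠ 0`. -/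
theorem statement11 :
    ∃ φ : (ℝ ⊗[ℤ] AddCircle (1 : ℝ)) →+ KaehlerDifferential ℤ ℝ,
      Function.Surjective φ ∧
      ∀ (ℓ t : ℝ), Real.sin (Real.pi * t) ≠ 0 →
        φ (ℓ ⊗ₜ[ℤ] (t : AddCircle (1 : ℝ)))
          = (ℓ * (Real.sin (Real.pi * t))⁻¹) •
              (KaehlerDifferential.D ℤ ℝ (Real.cos (Real.pi * t))) := by
  refine ⟨jessenMap.toAddMonoidHom, jessenMap_surjective, fun ℓ t _ => ?_⟩
  rw [LinearMap.toAddMonoidHom_coe, jessenMap_tmul, dCosDivSin, smul_smul]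

end
end
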